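/- Let Q be a finite connected quandle whose underlying set is {1,2,…,n} and whose elements are naturally ordered. Then the set of all natural reorderings with respect to r_n forms a subgroup of the symmetric group on {1,2,…,n}. -/

import Mathlib

/-- A quandle structure on a set `Q`: a binary operation `op` that is idempotent,
right-invertible (each right translation `r_b : x ↦ x * b` is a bijection) and
right-distributive. -/
structure QuandleOp (Q : Type*) where
  op : Q → Q → Q
  op_self : ∀ a, op a a = a
  op_bijective : ∀ b, Function.Bijective fun a => op a b
  op_distrib : ∀ a b c, op (op a b) c = op (op a c) (op b c)

namespace QuandleOp

/-- The right translation `r_b : x ↦ x * b`, as a permutation of `Q`. -/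
noncomputable def r {Q : Type*} (S : QuandleOp Q) (b : Q) : Equiv.Perm Q :=
  Equiv.ofBijective _ (S.op_bijective b)

/-- A quandle is connected if every element can be taken to every other element by a
finite composition of the maps `r_b` and their inverses, i.e. by an element of the
subgroup of permutations generated by the `r_b`. -/
def Connected {Q : Type*} (S : QuandleOp Q) : Prop :=
  ∀ a b : Q, ∃ g ∈ Subgroup.closure (Set.range S.r), g a = b

end QuandleOp

/-- The element `n` of the quandle `{1, …, n}` modelled as `Fin n` (element `m`
corresponds to the index `m - 1`). -/
def theTop (n : ℕ) [NeZero n] : Fin n :=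
  ⟨n - 1, Nat.sub_lt (Nat.pos_of_ne_zero (NeZero.ne n)) Nat.one_pos⟩

/-- `ν` is a natural reordering with respect to `r q`, realized by the presentation of
`r q` as the product of the disjoint cycles `(I s 0  I s 1 … I s (ℓ s - 1))` for
`s = 0, …, k-1` together with the fixed point `(q)`, where `1 ≤ ℓ 0 ≤ ⋯ ≤ ℓ (k-1)`:
it sends `q` to the top element `n` (index `n - 1`) and sends the `t`-th entry of the
`s`-th cycle to the element with index `(ℓ 0 + ⋯ + ℓ (s-1)) + t`. -/
def IsNaturalReorderingWith {n : ℕ} (S : QuandleOp (Fin n)) (q : Fin n)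
    (ν : Equiv.Perm (Fin n)) {k : ℕ} (ℓ : Fin k → ℕ)
    (I : (s : Fin k) → Fin (ℓ s) → Fin n) : Prop :=
  (ν q).val = n - 1 ∧
  (∀ s, 1 ≤ ℓ s) ∧
  Monotone ℓ ∧
  (∑ s, ℓ s) = n - 1 ∧
  Function.Injective (fun p : (s : Fin k) × Fin (ℓ s) => I p.1 p.2) ∧
  (∀ (s : Fin k) (t : Fin (ℓ s)), I s t ≠ q) ∧
  (∀ (s : Fin k) (t : Fin (ℓ s)),
    S.op (I s t) q = I s ⟨(t.val + 1) % ℓ s, Nat.mod_lt _ (Nat.zero_lt_of_lt t.isLt)⟩) ∧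
  (∀ (s : Fin k) (t : Fin (ℓ s)),
    (ν (I s t)).val = (∑ j ∈ Finset.Iio s, ℓ j) + t.val)

/-- `ν` is a natural reordering with respect to `r q` (for some presentation of `r q`
as a product of disjoint cycles of weakly increasing lengths, together with `(q)`). -/
def IsNaturalReordering {n : ℕ} (S : QuandleOp (Fin n)) (q : Fin n)
    (ν : Equiv.Perm (Fin n)) : Prop :=
  ∃ (k : ℕ) (ℓ : Fin k → ℕ) (I : (s : Fin k) → Fin (ℓ s) → Fin n),
    IsNaturalReorderingWith S q ν ℓ I

/-- The elements of the quandle are naturally ordered with cycle lengths `ℓ`: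
`r n` is decomposed into disjoint cycles in form (N), i.e. the identity reordering is a
natural reordering with respect to `r n` with cycle lengths `ℓ`.  (This also says that
the profile of the quandle is `{1, ℓ 0, …, ℓ (k-1)}`.) -/
def NaturallyOrderedWith {n : ℕ} [NeZero n] (S : QuandleOp (Fin n)) {k : ℕ}
    (ℓ : Fin k → ℕ) : Prop :=
  ∃ I, IsNaturalReorderingWith S (theTop n) (Equiv.refl (Fin n)) ℓ I

/-- The elements of the quandle are naturally ordered (the quandle matrix is in
canonical form). -/
def NaturallyOrdered {n : ℕ} [NeZero n] (S : QuandleOp (Fin n)) : Prop :=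
  ∃ (k : ℕ) (ℓ : Fin k → ℕ), NaturallyOrderedWith S ℓ

/-- The quandle operation (equivalently, the quandle matrix) obtained after reordering
the elements by the bijection `ν`: the new matrix has entry `ν (i * j)` in row `ν i`
and column `ν j`. -/
def reorderedOp {n : ℕ} (S : QuandleOp (Fin n)) (ν : Equiv.Perm (Fin n)) :
    Fin n → Fin n → Fin n :=
  fun i j => ν (S.op (ν.symm i) (ν.symm j))

/- Since the identity is a natural reordering, `r n` is in form (N) with some cycle lengths
`ℓ₀`. In any presentation of `r q` as disjoint cycles and the fixed point `q`, the number of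
cycles of length `m` is the number of points `x ≠ q` of period `m`, divided by `m`; so the
sorted cycle lengths are determined by `r q`, and every natural reordering has lengths `ℓ₀`.
It therefore sends the `t`-th point of its `s`-th cycle to the `t`-th point of the `s`-th
cycle of form (N): it fixes `n` and commutes with `r n`. Conversely, such a permutation
carries form (N) to a presentation realizing it as a natural reordering. So the natural
reorderings are the centralizer of `r n` intersected with the stabilizer of `n`. -/

open Finset Function

@[simp]
theorem QuandleOp.r_apply {Q : Type*} (S : QuandleOp Q) (a b : Q) : S.r b a = S.op a b := rfl

theorem Finset.card_filter_sigma_fin_fst_eq {ι : Type*} [Fintype ι] (ℓ : ι → ℕ) (m : ℕ) :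
    #{p : (i : ι) × Fin (ℓ i) | ℓ p.1 = m} = m * #{i | ℓ i = m} := by
  rw [← univ_sigma_univ, filter_sigma, card_sigma, card_filter, mul_sum]
  refine sum_congr rfl fun i _ => ?_
  split_ifs with h <;> simp [h]

namespace IsNaturalReorderingWith

variable {n k k' : ℕ} {S : QuandleOp (Fin n)} {q : Fin n} {ν μ : Equiv.Perm (Fin n)}
  {ℓ : Fin k → ℕ} {I I₀ : (s : Fin k) → Fin (ℓ s) → Fin n}
  {ℓ' : Fin k' → ℕ} {I' : (s : Fin k') → Fin (ℓ' s) → Fin n}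

theorem exists_eq_of_ne (h : IsNaturalReorderingWith S q ν ℓ I) {x : Fin n} (hx : x ≠ q) :
    ∃ s t, I s t = x := by
  obtain ⟨-, -, -, hsum, hinj, hne, -, -⟩ := h
  let F : ((s : Fin k) × Fin (ℓ s)) → {x // x ≠ q} := fun p => ⟨I p.1 p.2, hne p.1 p.2⟩
  have hF : Bijective F := (Fintype.bijective_iff_injective_and_card F).mpr
    ⟨fun p p' hp => hinj (congrArg Subtype.val hp), by simp [hsum]⟩
  obtain ⟨p, hp⟩ := hF.2 ⟨x, hx⟩
  exact ⟨p.1, p.2, congrArg Subtype.val hp⟩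

theorem injective_cycle (h : IsNaturalReorderingWith S q ν ℓ I) (s : Fin k) :
    Injective (I s) := by
  obtain ⟨-, -, -, -, hinj, -, -, -⟩ := h
  intro t t' htt'
  exact eq_of_heq (Sigma.mk.inj_iff.mp (hinj htt' :
    (⟨s, t⟩ : (s : Fin k) × Fin (ℓ s)) = ⟨s, t'⟩)).2

theorem iterate_r_apply (h : IsNaturalReorderingWith S q ν ℓ I) (j : ℕ) (s : Fin k)
    (t : Fin (ℓ s)) : (S.r q)^[j] (I s t) = I s ⟨(t + j) % ℓ s, Nat.mod_lt _ t.pos⟩ := by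
  obtain ⟨-, -, -, -, -, -, hop, -⟩ := h
  induction j generalizing t with
  | zero => simp [Nat.mod_eq_of_lt t.isLt]
  | succ j ih =>
    rw [iterate_succ_apply, QuandleOp.r_apply, hop, ih]
    congr 2
    rw [Nat.mod_add_mod, add_assoc, add_comm 1 j]

theorem isPeriodicPt_r_iff (h : IsNaturalReorderingWith S q ν ℓ I) {j : ℕ} {s : Fin k}
    {t : Fin (ℓ s)} : IsPeriodicPt (S.r q) j (I s t) ↔ ℓ s ∣ j := by
  rw [IsPeriodicPt, IsFixedPt, h.iterate_r_apply, (h.injective_cycle s).eq_iff, Fin.ext_iff,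
    ← Nat.add_modEq_left_iff, Nat.ModEq, Nat.mod_eq_of_lt t.isLt]

theorem minimalPeriod_r (h : IsNaturalReorderingWith S q ν ℓ I) (s : Fin k) (t : Fin (ℓ s)) :
    minimalPeriod (S.r q) (I s t) = ℓ s :=
  Nat.dvd_antisymm (isPeriodicPt_iff_minimalPeriod_dvd.mp (h.isPeriodicPt_r_iff.mpr dvd_rfl))
    (h.isPeriodicPt_r_iff.mp (isPeriodicPt_minimalPeriod _ _))

theorem card_filter_minimalPeriod_eq (h : IsNaturalReorderingWith S q ν ℓ I) (m : ℕ) :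
    #{x | x ≠ q ∧ minimalPeriod (S.r q) x = m} = m * #{s | ℓ s = m} := by
  have ⟨_, _, _, _, hinj, hne, _, _⟩ := h
  rw [← card_filter_sigma_fin_fst_eq]
  refine (card_bij (fun p _ => I p.1 p.2) ?_ (fun p _ p' _ hp => hinj hp) ?_).symm
  · intro p hp
    simp only [mem_filter_univ] at hp ⊢
    exact ⟨hne p.1 p.2, (h.minimalPeriod_r p.1 p.2).trans hp⟩
  · intro x hx
    simp only [mem_filter_univ] at hx
    obtain ⟨s, t, rfl⟩ := h.exists_eq_of_ne hx.1
    exact ⟨⟨s, t⟩, by simpa [h.minimalPeriod_r] using hx.2, rfl⟩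

theorem card_filter_length_eq (h : IsNaturalReorderingWith S q ν ℓ I)
    (h' : IsNaturalReorderingWith S q μ ℓ' I') (m : ℕ) :
    #{s | ℓ s = m} = #{s | ℓ' s = m} := by
  rcases Nat.eq_zero_or_pos m with rfl | hm
  · rw [filter_false_of_mem fun s _ => Nat.pos_iff_ne_zero.mp (h.2.1 s),
      filter_false_of_mem fun s _ => Nat.pos_iff_ne_zero.mp (h'.2.1 s), card_empty, card_empty]
  · exact Nat.eq_of_mul_eq_mul_left hm
      ((h.card_filter_minimalPeriod_eq m).symm.trans (h'.card_filter_minimalPeriod_eq m))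

theorem ofFn_length_eq (h : IsNaturalReorderingWith S q ν ℓ I)
    (h' : IsNaturalReorderingWith S q μ ℓ' I') : List.ofFn ℓ = List.ofFn ℓ' := by
  refine List.Perm.eq_of_sortedLE h.2.2.1.sortedLE_ofFn h'.2.2.1.sortedLE_ofFn ?_
  rw [← Multiset.coe_eq_coe, ← Fin.univ_val_map, ← Fin.univ_val_map]
  ext m
  simp only [Multiset.count_map, eq_comm (a := m)]
  exact h.card_filter_length_eq h' m

theorem apply_eq_of_one (h : IsNaturalReorderingWith S q ν ℓ I)
    (h₀ : IsNaturalReorderingWith S q 1 ℓ I₀) (s : Fin k) (t : Fin (ℓ s)) :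
    ν (I s t) = I₀ s t := by
  obtain ⟨-, -, -, -, -, -, -, hval⟩ := h
  obtain ⟨-, -, -, -, -, -, -, hval₀⟩ := h₀
  exact Fin.ext ((hval s t).trans (hval₀ s t).symm)

theorem apply_self_of_one (h : IsNaturalReorderingWith S q ν ℓ I)
    (h₀ : IsNaturalReorderingWith S q 1 ℓ I₀) : ν q = q :=
  Fin.ext (h.1.trans h₀.1.symm)

theorem commute_r_of_one (h : IsNaturalReorderingWith S q ν ℓ I)
    (h₀ : IsNaturalReorderingWith S q 1 ℓ I₀) : Commute ν (S.r q) := by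
  have ⟨_, _, _, _, _, _, hop, _⟩ := h
  have ⟨_, _, _, _, _, _, hop₀, _⟩ := h₀
  refine Equiv.ext fun x => ?_
  simp only [Equiv.Perm.mul_apply, QuandleOp.r_apply]
  by_cases hx : x = q
  · rw [hx, S.op_self, h.apply_self_of_one h₀, S.op_self]
  · obtain ⟨s, t, rfl⟩ := h.exists_eq_of_ne hx
    rw [hop, h.apply_eq_of_one h₀, h.apply_eq_of_one h₀, hop₀]

theorem mul_of_commute (h : IsNaturalReorderingWith S q μ ℓ I) (hc : Commute ν (S.r q))
    (hq : ν q = q) : IsNaturalReorderingWith S q (μ * ν) ℓ (fun s t => ν⁻¹ (I s t)) := by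
  obtain ⟨hμq, hpos, hmono, hsum, hinj, hne, hop, hval⟩ := h
  have hc' : ∀ x, ν⁻¹ (S.op x q) = S.op (ν⁻¹ x) q := fun x =>
    congrArg (· x) hc.inv_left.eq
  refine ⟨by simpa [hq] using hμq, hpos, hmono, hsum, fun p p' hp => hinj (ν⁻¹.injective hp),
    fun s t => ?_, fun s t => ?_, fun s t => by simpa using hval s t⟩
  · rw [Ne, Equiv.Perm.inv_eq_iff_eq, hq]
    exact hne s t
  · rw [← hc', hop]

end IsNaturalReorderingWith

theorem IsNaturalReordering.exists_isNaturalReorderingWith_of_length {n k₀ : ℕ}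
    {S : QuandleOp (Fin n)} {q : Fin n} {ν μ : Equiv.Perm (Fin n)} {ℓ₀ : Fin k₀ → ℕ}
    {I₀ : (s : Fin k₀) → Fin (ℓ₀ s) → Fin n} (h : IsNaturalReordering S q ν)
    (h₀ : IsNaturalReorderingWith S q μ ℓ₀ I₀) : ∃ I, IsNaturalReorderingWith S q ν ℓ₀ I := by
  obtain ⟨k, ℓ, I, h⟩ := h
  have hℓ := h.ofFn_length_eq h₀
  obtain rfl : k = k₀ := by simpa using congrArg List.length hℓ
  obtain rfl : ℓ = ℓ₀ := List.ofFn_injective hℓ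
  exact ⟨I, h⟩

theorem isNaturalReordering_iff {n k : ℕ} {S : QuandleOp (Fin n)} {q : Fin n}
    {ν : Equiv.Perm (Fin n)} {ℓ : Fin k → ℕ} {I₀ : (s : Fin k) → Fin (ℓ s) → Fin n}
    (h₀ : IsNaturalReorderingWith S q 1 ℓ I₀) :
    IsNaturalReordering S q ν ↔ Commute ν (S.r q) ∧ ν q = q := by
  refine ⟨fun h => ?_, fun ⟨hc, hq⟩ => ⟨k, ℓ, _, one_mul ν ▸ h₀.mul_of_commute hc hq⟩⟩
  obtain ⟨I, h⟩ := h.exists_isNaturalReorderingWith_of_length h₀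
  exact ⟨h.commute_r_of_one h₀, h.apply_self_of_one h₀⟩

theorem natural_reorderings_form_subgroup_general
    {n : ℕ} [NeZero n] (S : QuandleOp (Fin n))
    (hord : NaturallyOrdered S) :
    ∃ H : Subgroup (Equiv.Perm (Fin n)),
      ∀ ν : Equiv.Perm (Fin n), ν ∈ H ↔ IsNaturalReordering S (theTop n) ν := by
  obtain ⟨k, ℓ, I, h⟩ := hord
  refine ⟨Subgroup.centralizer {S.r (theTop n)} ⊓ MulAction.stabilizer _ (theTop n), fun ν => ?_⟩
  rw [Subgroup.mem_inf, Subgroup.mem_centralizer_singleton_iff, MulAction.mem_stabilizer_iff,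
    isNaturalReordering_iff h]
  rfl

/-- Lemma `group` of the paper: let the elements of a finite
connected quandle on `{1,…,n}` be naturally ordered.  Then the set of all natural
reorderings with respect to `r n` is a subgroup of the symmetric group on
`{1,…,n}`. -/
theorem natural_reorderings_form_subgroup
    {n : ℕ} [NeZero n] (S : QuandleOp (Fin n)) (hconn : S.Connected)
    (hord : NaturallyOrdered S) :
    ∃ H : Subgroup (Equiv.Perm (Fin n)),
      ∀ ν : Equiv.Perm (Fin n), ν ∈ H ↔ IsNaturalReordering S (theTop n) ν :=
  natural_reorderings_form_subgroup_general S hord
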